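/- The average eccentricity of the Fibonacci cube Γ_n, divided by n, converges to (5+√5)/10 as n → ∞. -/

import Mathlib

open Finset

/-- Number of positions where two binary strings differ. -/
def diffCount {n : ℕ} (u v : Fin n → Bool) : ℕ :=
  (Finset.univ.filter fun i => u i ≠ v i).card

/-- Fibonacci strings: binary strings with no two consecutive 1's. -/
def FibPred (n : ℕ) (v : Fin n → Bool) : Prop :=
  ∀ i j : Fin n, (j : ℕ) = (i : ℕ) + 1 → ¬(v i = true ∧ v j = true)

instance (n : ℕ) : DecidablePred (FibPred n) := fun v => by
  unfold FibPred; infer_instance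

/-- Vertices of the Fibonacci cube: Fibonacci strings of length n. -/
def FibV (n : ℕ) := {v : Fin n → Bool // FibPred n v}

instance (n : ℕ) : Fintype (FibV n) := Subtype.fintype _
instance (n : ℕ) : DecidableEq (FibV n) := Subtype.instDecidableEq

/-- The Fibonacci cube Γ_n: Fibonacci strings adjacent iff they differ in exactly one position. -/
def fibCube (n : ℕ) : SimpleGraph (FibV n) where
  Adj u v := diffCount u.1 v.1 = 1
  symm := by
    constructor; intro u v h
    have he : (Finset.univ.filter fun i => v.1 i ≠ u.1 i)
        = (Finset.univ.filter fun i => u.1 i ≠ v.1 i) := by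
      apply Finset.filter_congr; intro i _; exact ne_comm
    simpa [diffCount, he] using h
  loopless := by constructor; intro u h; simp [diffCount] at h

instance (n : ℕ) : DecidableRel (fibCube n).Adj := fun u v => Nat.decEq _ _

/-- Eccentricity of a vertex in a finite graph: the maximum distance to any vertex. -/
noncomputable def gecc {V : Type*} [Fintype V] (G : SimpleGraph V) (u : V) : ℕ :=
  Finset.univ.sup (G.dist u)

/-!
Distances in `Γ_n` are Hamming distances: from `u` towards `v` one can always flip a differing bit
and stay a Fibonacci string (turn a `1` of `u` into `0`, or, if `u ≤ v`, move up towards `v`).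
Any Fibonacci string agrees with `u` on one bit of each pair of consecutive `0`s of `u`, and the
string with `1`s exactly at the odd-numbered places of the runs of `0`s of `u` attains this bound,
so `ecc u = n - ∑ ⌊ℓ / 2⌋` over the runs of `0`s of `u`. Reading strings from left to right
with the three-state automaton (last bit `1`, odd or even final run of `0`s) gives linear
recurrences for the number of strings and for the sum of eccentricities in each state. They are
solved by Fibonacci numbers: `|Γ_n| = F (n + 2)` and `5 ∑ ecc = n (3 F n + 4 F (n + 1)) + 3 F n`.
As `F (n + k) / F (n + 2) → φ ^ (k - 2)`, the limit is `(3 φ⁻² + 4 φ⁻¹) / 5 = (5 + √5) / 10`.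
-/

open Function

section Hamming

variable {ι : Type*} [Fintype ι] {β : ι → Type*} [∀ i, DecidableEq (β i)]

theorem card_filter_eq_add_hammingDist (x y : ∀ i, β i) :
    #{i | x i = y i} + hammingDist x y = Fintype.card ι :=
  Finset.card_filter_add_card_filter_not _

variable [DecidableEq ι]

theorem hammingDist_update_self {x : ∀ i, β i} {i : ι} {b : β i} (h : x i ≠ b) :
    hammingDist x (update x i b) = 1 := by
  rw [hammingDist, Finset.card_eq_one]
  refine ⟨i, Finset.ext fun j => ?_⟩
  rcases eq_or_ne j i with rfl | hj <;> simp [*]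

theorem hammingDist_update_add_one {x y : ∀ i, β i} {i : ι} (h : x i ≠ y i) :
    hammingDist (update x i (y i)) y + 1 = hammingDist x y := by
  have hfilter : ({j | update x i (y i) j ≠ y j} : Finset ι) =
      ({j | x j ≠ y j} : Finset ι).erase i := by
    ext j
    rcases eq_or_ne j i with rfl | hj <;> simp [*]
  rw [hammingDist, hfilter, Finset.card_erase_add_one (by simpa using h), hammingDist]

end Hamming

theorem hammingDist_snoc {α : Type*} [DecidableEq α] {n : ℕ} (x y : Fin n → α) (a b : α) :
    hammingDist (Fin.snoc x a : Fin (n + 1) → α) (Fin.snoc y b) =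
      hammingDist x y + if a = b then 0 else 1 := by
  simp only [hammingDist, Finset.card_filter, Fin.sum_univ_castSucc, Fin.snoc_castSucc,
    Fin.snoc_last, ite_not]

section FibonacciCube

variable {n : ℕ}

theorem FibPred.mono {u v : Fin n → Bool} (hv : FibPred n v) (huv : u ≤ v) : FibPred n u :=
  fun i j hij ⟨hi, hj⟩ =>
    hv i j hij ⟨Bool.le_iff_imp.mp (huv i) hi, Bool.le_iff_imp.mp (huv j) hj⟩

theorem hammingDist_le_length {u v : FibV n} (p : (fibCube n).Walk u v) :
    hammingDist u.1 v.1 ≤ p.length := by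
  induction p with
  | nil => simp
  | @cons a b c hadj _ ih =>
    have hab : hammingDist a.1 b.1 = 1 := hadj
    rw [SimpleGraph.Walk.length_cons]
    linarith [hammingDist_triangle a.1 b.1 c.1]

theorem exists_adj_hammingDist_add_one {u v : FibV n} (huv : u ≠ v) :
    ∃ w, (fibCube n).Adj u w ∧ hammingDist w.1 v.1 + 1 = hammingDist u.1 v.1 := by
  have hflip : ∃ i, u.1 i ≠ v.1 i ∧ FibPred n (update u.1 i (v.1 i)) := by
    by_cases hdown : ∃ i, u.1 i = true ∧ v.1 i = false
    · obtain ⟨i, hu, hv⟩ := hdown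
      refine ⟨i, by simp [hu, hv], u.2.mono fun j => ?_⟩
      rcases eq_or_ne j i with rfl | hj <;> simp [*]
    · push Not at hdown
      obtain ⟨i, hi⟩ := Function.ne_iff.mp (Subtype.val_injective.ne huv)
      refine ⟨i, hi, v.2.mono fun j => ?_⟩
      rcases eq_or_ne j i with rfl | hj
      · simp
      · cases h : u.1 j <;> simp_all
  obtain ⟨i, hi, hfib⟩ := hflip
  exact ⟨⟨_, hfib⟩, hammingDist_update_self hi, hammingDist_update_add_one hi⟩

theorem exists_walk_length_eq_hammingDist (u v : FibV n) :
    ∃ p : (fibCube n).Walk u v, p.length = hammingDist u.1 v.1 := by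
  induction h : hammingDist u.1 v.1 generalizing u with
  | zero =>
    obtain rfl : u = v := Subtype.ext (hammingDist_eq_zero.mp h)
    exact ⟨.nil, rfl⟩
  | succ k ih =>
    have huv : u ≠ v := by rintro rfl; simp at h
    obtain ⟨w, hadj, hw⟩ := exists_adj_hammingDist_add_one huv
    obtain ⟨p, hp⟩ := ih w (by omega)
    exact ⟨.cons hadj p, by simp [hp]⟩

theorem fibCube_dist (u v : FibV n) : (fibCube n).dist u v = hammingDist u.1 v.1 := by
  obtain ⟨p, hp⟩ := exists_walk_length_eq_hammingDist u v
  obtain ⟨q, hq⟩ := p.reachable.exists_walk_length_eq_dist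
  exact le_antisymm (hp ▸ SimpleGraph.dist_le p) (hq ▸ hammingDist_le_length q)

end FibonacciCube

/-- `oddZeroRun s i` holds iff `s i = false` and the run of `false`s of `s` ending at `i` has odd
length. -/
def oddZeroRun (s : ℕ → Bool) : ℕ → Bool
  | 0 => !s 0
  | i + 1 => !s (i + 1) && (s i || !oddZeroRun s i)

section OddZeroRun

variable {s t : ℕ → Bool}

theorem oddZeroRun_congr {i : ℕ} (h : ∀ j ≤ i, s j = t j) :
    oddZeroRun s i = oddZeroRun t i := by
  induction i with
  | zero => simp [oddZeroRun, h 0 le_rfl]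
  | succ i ih =>
    simp only [oddZeroRun, h (i + 1) le_rfl, h i (by omega), ih fun j hj => h j (by omega)]

theorem eq_false_of_oddZeroRun {i : ℕ} (h : oddZeroRun s i) : s i = false := by
  cases i <;> simp_all [oddZeroRun]

theorem oddZeroRun_zero_ne : oddZeroRun s 0 ≠ s 0 := by
  cases h : s 0 <;> simp [oddZeroRun, h]

theorem eq_oddZeroRun_succ_iff {j : ℕ} :
    s (j + 1) = oddZeroRun s (j + 1) ↔ s (j + 1) = false ∧ oddZeroRun s j := by
  have := @eq_false_of_oddZeroRun s j
  cases h₁ : s (j + 1) <;> cases h₂ : oddZeroRun s j <;> simp_all [oddZeroRun]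

theorem not_oddZeroRun_and_succ (j : ℕ) : ¬(oddZeroRun s j ∧ oddZeroRun s (j + 1)) := by
  rintro ⟨h, h'⟩
  simp [oddZeroRun, h, eq_false_of_oddZeroRun h] at h'

end OddZeroRun

def padFalse {n : ℕ} (u : Fin n → Bool) (i : ℕ) : Bool :=
  if h : i < n then u ⟨i, h⟩ else false

/-- The vertex of `Γ_n` farthest from `u`: `1`s at the odd-numbered places of the runs of `0`s
of `u`. -/
def farthest {n : ℕ} (u : Fin n → Bool) : Fin n → Bool :=
  fun i => oddZeroRun (padFalse u) i

section Farthest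

variable {n : ℕ}

theorem padFalse_val (u : Fin n → Bool) (i : Fin n) : padFalse u i = u i := by
  simp [padFalse]

theorem fibPred_farthest (u : Fin n → Bool) : FibPred n (farthest u) := by
  intro i j hij
  simpa [farthest, hij] using not_oddZeroRun_and_succ (s := padFalse u) i

theorem eq_farthest_iff {u : Fin n → Bool} {i : Fin n} :
    u i = farthest u i ↔ ∃ j, i.1 = j + 1 ∧ u i = false ∧ oddZeroRun (padFalse u) j := by
  rw [← padFalse_val u i]
  obtain ⟨_ | j, hi⟩ := i
  · simpa [farthest] using (oddZeroRun_zero_ne (s := padFalse u)).symm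
  · simpa [farthest] using eq_oddZeroRun_succ_iff (s := padFalse u) (j := j)

theorem not_eq_farthest_and_succ {u : Fin n → Bool} {i j : Fin n} (hij : j.1 = i.1 + 1) :
    ¬(u i = farthest u i ∧ u j = farthest u j) := by
  rintro ⟨hi, hj⟩
  obtain ⟨-, -, hui, -⟩ := eq_farthest_iff.mp hi
  obtain ⟨k, hk, -, hrun⟩ := eq_farthest_iff.mp hj
  obtain rfl : k = i.1 := by omega
  simp [farthest, hui] at hi
  simp [hi] at hrun

/-- A Fibonacci string agrees with `u` at `i - 1` or at `i` whenever `farthest u` agrees with `u`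
at `i`, since `u` vanishes at both places; these pairs are disjoint. -/
theorem card_eq_farthest_le {u v : Fin n → Bool} (hv : FibPred n v) :
    #{i | u i = farthest u i} ≤ #{i | u i = v i} := by
  let prev (i : Fin n) : Fin n := ⟨i - 1, by omega⟩
  let f (i : Fin n) : Fin n := if u (prev i) = v (prev i) then prev i else i
  refine Finset.card_le_card_of_injOn f (fun i hi => ?_) (fun i hi j hj hfij => ?_)
  · simp only [Finset.coe_filter, Finset.mem_univ, true_and, Set.mem_ofPred_eq] at hi ⊢
    obtain ⟨k, hk, hui, hrun⟩ := eq_farthest_iff.mp hi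
    by_cases hprev : u (prev i) = v (prev i)
    · simp [f, hprev]
    · have hup : u (prev i) = false := by
        rw [← padFalse_val u (prev i), show (prev i).1 = k by simp [prev]; omega]
        exact eq_false_of_oddZeroRun hrun
      have hvp : v (prev i) = true := by simpa [hup] using (Ne.symm hprev)
      have hvi : v i = false := by
        simpa [hvp] using hv (prev i) i (by simp [prev]; omega)
      simp [f, hprev, hui, hvi]
  · simp only [Finset.coe_filter, Finset.mem_univ, true_and, Set.mem_ofPred_eq] at hi hj
    obtain ⟨a, ha, -⟩ := eq_farthest_iff.mp hi
    obtain ⟨b, hb, -⟩ := eq_farthest_iff.mp hj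
    simp only [f] at hfij
    split_ifs at hfij <;> simp only [prev, Fin.ext_iff] at hfij
    · exact Fin.ext (by omega)
    · exact absurd ⟨hj, hi⟩ (not_eq_farthest_and_succ (by omega))
    · exact absurd ⟨hi, hj⟩ (not_eq_farthest_and_succ (by omega))
    · exact Fin.ext hfij

theorem hammingDist_le_hammingDist_farthest {u v : Fin n → Bool} (hv : FibPred n v) :
    hammingDist u v ≤ hammingDist u (farthest u) := by
  have h₁ := card_filter_eq_add_hammingDist u v
  have h₂ := card_filter_eq_add_hammingDist u (farthest u)
  have hagree := card_eq_farthest_le (u := u) hv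
  omega

theorem gecc_fibCube (u : FibV n) : gecc (fibCube n) u = hammingDist u.1 (farthest u.1) := by
  refine le_antisymm (Finset.sup_le fun v _ => ?_) ?_
  · exact (fibCube_dist u v).trans_le (hammingDist_le_hammingDist_farthest v.2)
  · exact (fibCube_dist u ⟨_, fibPred_farthest u.1⟩).symm.trans_le
      (Finset.le_sup (f := (fibCube n).dist u) (Finset.mem_univ _))

end Farthest

section Snoc

variable {n : ℕ}

theorem padFalse_snoc_of_lt (u : Fin n → Bool) (b : Bool) {j : ℕ} (h : j < n) :
    padFalse (Fin.snoc u b : Fin (n + 1) → Bool) j = padFalse u j := by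
  simp [padFalse, h, Nat.lt_succ_of_lt h, Fin.snoc]

theorem padFalse_snoc_self (u : Fin n → Bool) (b : Bool) :
    padFalse (Fin.snoc u b : Fin (n + 1) → Bool) n = b := by
  simp [padFalse, Fin.snoc]

theorem oddZeroRun_padFalse_snoc_of_lt (u : Fin n → Bool) (b : Bool) {j : ℕ} (h : j < n) :
    oddZeroRun (padFalse (Fin.snoc u b : Fin (n + 1) → Bool)) j = oddZeroRun (padFalse u) j :=
  oddZeroRun_congr fun _ hk => padFalse_snoc_of_lt u b (by omega)

theorem farthest_snoc (u : Fin n → Bool) (b : Bool) :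
    farthest (Fin.snoc u b : Fin (n + 1) → Bool) =
      Fin.snoc (farthest u) (oddZeroRun (padFalse (Fin.snoc u b : Fin (n + 1) → Bool)) n) := by
  funext i
  induction i using Fin.lastCases with
  | last => simp [farthest]
  | cast i => simp [farthest, oddZeroRun_padFalse_snoc_of_lt u b i.2]

theorem fibPred_snoc_iff (u : Fin n → Bool) (b : Bool) :
    FibPred (n + 1) (Fin.snoc u b) ↔
      FibPred n u ∧ ∀ i : Fin n, i.1 + 1 = n → ¬(u i = true ∧ b = true) := by
  constructor
  · intro h
    refine ⟨fun i j hij => ?_, fun i hi => ?_⟩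
    · simpa using h i.castSucc j.castSucc (by simpa using hij)
    · simpa using h i.castSucc (Fin.last n) (by simp [hi])
  · rintro ⟨hu, hlast⟩ i j hij
    induction j using Fin.lastCases with
    | last =>
      induction i using Fin.lastCases with
      | last => simp at hij
      | cast i => simpa using hlast i (by simpa using hij.symm)
    | cast j =>
      induction i using Fin.lastCases with
      | last => simp at hij; omega
      | cast i => simpa using hu i j (by simpa using hij)

theorem fibPred_snoc_false (u : Fin n → Bool) :
    FibPred (n + 1) (Fin.snoc u false) ↔ FibPred n u := by
  simp [fibPred_snoc_iff]

theorem fibPred_snoc_true (u : Fin (n + 1) → Bool) :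
    FibPred (n + 2) (Fin.snoc u true) ↔ FibPred (n + 1) u ∧ u (Fin.last n) = false := by
  have hlast : ∀ i : Fin (n + 1), i.1 = n ↔ i = Fin.last n := fun i => by
    simp [Fin.ext_iff]
  simp [fibPred_snoc_iff, hlast]

theorem oddZeroRun_padFalse_snoc_last (u : Fin (n + 1) → Bool) (b : Bool) :
    oddZeroRun (padFalse (Fin.snoc u b : Fin (n + 2) → Bool)) (n + 1) =
      (!b && (u (Fin.last n) || !oddZeroRun (padFalse u) n)) := by
  have := padFalse_val u (Fin.last n)
  simp only [Fin.val_last] at this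
  simp [oddZeroRun, padFalse_snoc_self, padFalse_snoc_of_lt, oddZeroRun_padFalse_snoc_of_lt, this]

end Snoc

/-- The state, after reading a string, of the automaton that computes `farthest` from left to
right: the string ends in `1`, or in a run of `0`s of odd or of even length. -/
inductive EndState
  | one
  | oddZeros
  | evenZeros
  deriving DecidableEq

section EndState

variable {n : ℕ}

def endState (u : Fin (n + 1) → Bool) : EndState :=
  if u (Fin.last n) then .one else if oddZeroRun (padFalse u) n then .oddZeros else .evenZeros

theorem endState_snoc_true (u : Fin (n + 1) → Bool) : endState (Fin.snoc u true) = .one := by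
  simp [endState]

theorem endState_snoc_false (u : Fin (n + 1) → Bool) :
    endState (Fin.snoc u false) =
      if endState u = .oddZeros then .evenZeros else .oddZeros := by
  unfold endState
  rw [oddZeroRun_padFalse_snoc_last]
  cases u (Fin.last n) <;> cases oddZeroRun (padFalse u) n <;> simp

theorem endState_eq_one_iff (u : Fin (n + 1) → Bool) :
    endState u = .one ↔ u (Fin.last n) = true := by
  unfold endState
  split_ifs <;> simp_all

theorem hammingDist_farthest_snoc (u : Fin (n + 1) → Bool) (b : Bool) :
    hammingDist (Fin.snoc u b : Fin (n + 2) → Bool) (farthest (Fin.snoc u b)) =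
      hammingDist u (farthest u) + if b = false ∧ endState u = .oddZeros then 0 else 1 := by
  rw [farthest_snoc, hammingDist_snoc, oddZeroRun_padFalse_snoc_last]
  unfold endState
  cases b <;> cases u (Fin.last n) <;> cases oddZeroRun (padFalse u) n <;> simp

end EndState

theorem sum_tuple_succ_bool {M : Type*} [AddCommMonoid M] {n : ℕ}
    (g : (Fin (n + 1) → Bool) → M) :
    ∑ v, g v = ∑ u : Fin n → Bool, (g (Fin.snoc u false) + g (Fin.snoc u true)) := by
  rw [← (Fin.snocEquiv fun _ => Bool).sum_comp, Fintype.sum_prod_type, Fintype.sum_bool,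
    add_comm, ← Finset.sum_add_distrib]
  rfl

def endSum (n : ℕ) (e : EndState) (f : (Fin (n + 1) → Bool) → ℕ) : ℕ :=
  ∑ u with FibPred (n + 1) u ∧ endState u = e, f u

section EndSum

variable {n : ℕ}

theorem endSum_succ (e : EndState) (f : (Fin (n + 2) → Bool) → ℕ) :
    endSum (n + 1) e f = ∑ u : Fin (n + 1) → Bool,
      ((if FibPred (n + 1) u ∧ endState (Fin.snoc u false) = e then f (Fin.snoc u false)
          else 0) +
        if FibPred (n + 1) u ∧ endState u ≠ .one ∧ e = .one then f (Fin.snoc u true)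
          else 0) := by
  rw [endSum, Finset.sum_filter, sum_tuple_succ_bool]
  refine Finset.sum_congr rfl fun u _ => ?_
  simp only [fibPred_snoc_false, fibPred_snoc_true, endState_snoc_true, ne_eq, endState_eq_one_iff]
  cases e <;> cases u (Fin.last n) <;> simp

theorem endSum_succ_one (f : (Fin (n + 2) → Bool) → ℕ) :
    endSum (n + 1) .one f = endSum n .oddZeros (fun u => f (Fin.snoc u true)) +
      endSum n .evenZeros (fun u => f (Fin.snoc u true)) := by
  rw [endSum_succ, endSum, endSum, Finset.sum_filter, Finset.sum_filter, ← Finset.sum_add_distrib]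
  refine Finset.sum_congr rfl fun u _ => ?_
  rw [endState_snoc_false]
  cases endState u <;> simp

theorem endSum_succ_oddZeros (f : (Fin (n + 2) → Bool) → ℕ) :
    endSum (n + 1) .oddZeros f = endSum n .one (fun u => f (Fin.snoc u false)) +
      endSum n .evenZeros (fun u => f (Fin.snoc u false)) := by
  rw [endSum_succ, endSum, endSum, Finset.sum_filter, Finset.sum_filter, ← Finset.sum_add_distrib]
  refine Finset.sum_congr rfl fun u _ => ?_
  rw [endState_snoc_false]
  cases endState u <;> simp

theorem endSum_succ_evenZeros (f : (Fin (n + 2) → Bool) → ℕ) :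
    endSum (n + 1) .evenZeros f = endSum n .oddZeros (fun u => f (Fin.snoc u false)) := by
  rw [endSum_succ, endSum, Finset.sum_filter]
  refine Finset.sum_congr rfl fun u _ => ?_
  rw [endState_snoc_false]
  cases endState u <;> simp

theorem endSum_congr {e : EndState} {f g : (Fin (n + 1) → Bool) → ℕ}
    (h : ∀ u, endState u = e → f u = g u) : endSum n e f = endSum n e g :=
  Finset.sum_congr rfl fun u hu => h u (Finset.mem_filter.mp hu).2.2

theorem endSum_add (e : EndState) (f g : (Fin (n + 1) → Bool) → ℕ) :
    endSum n e (fun u => f u + g u) = endSum n e f + endSum n e g :=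
  Finset.sum_add_distrib

theorem sum_fibV_eq_endSum (g : (Fin (n + 1) → Bool) → ℕ) :
    ∑ u : FibV (n + 1), g u.1 =
      endSum n .one g + endSum n .oddZeros g + endSum n .evenZeros g := by
  have hsub : ∑ u : FibV (n + 1), g u.1 = ∑ u with FibPred (n + 1) u, g u :=
    (Finset.sum_subtype _ (fun _ => by simp) g).symm
  simp only [hsub, endSum, Finset.sum_filter, ← Finset.sum_add_distrib]
  refine Finset.sum_congr rfl fun u _ => ?_
  cases endState u <;> simp

end EndSum

def endCount (n : ℕ) (e : EndState) : ℕ := endSum n e fun _ => 1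

def endEccSum (n : ℕ) (e : EndState) : ℕ := endSum n e fun u => hammingDist u (farthest u)

theorem endEccSum_snoc (n : ℕ) (e : EndState) (b : Bool) :
    endSum n e
        (fun u => hammingDist (Fin.snoc u b : Fin (n + 2) → Bool) (farthest (Fin.snoc u b))) =
      endEccSum n e + if b = false ∧ e = .oddZeros then 0 else endCount n e := by
  have hsnoc : ∀ u, endState u = e → hammingDist (Fin.snoc u b : Fin (n + 2) → Bool)
      (farthest (Fin.snoc u b)) =
        hammingDist u (farthest u) + if b = false ∧ e = .oddZeros then 0 else 1 :=
    fun u hu => hu ▸ hammingDist_farthest_snoc u b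
  rw [endSum_congr hsnoc, endSum_add]
  split_ifs
  · simp [endSum, endEccSum]
  · rfl

theorem endCount_eq (n : ℕ) :
    endCount n .one = Nat.fib (n + 1) ∧ endCount n .oddZeros = Nat.fib (n + 1) ∧
      endCount n .evenZeros = Nat.fib n := by
  induction n with
  | zero => decide
  | succ n ih =>
    obtain ⟨h₁, h₂, h₃⟩ := ih
    simp only [endCount, endSum_succ_one, endSum_succ_oddZeros, endSum_succ_evenZeros] at *
    refine ⟨?_, ?_, ?_⟩ <;> simp only [h₁, h₂, h₃, Nat.fib_add_two] <;> ring

theorem endEccSum_succ_one (n : ℕ) :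
    endEccSum (n + 1) .one = endEccSum n .oddZeros + endCount n .oddZeros +
      (endEccSum n .evenZeros + endCount n .evenZeros) := by
  rw [endEccSum, endSum_succ_one, endEccSum_snoc, endEccSum_snoc]
  simp

theorem endEccSum_succ_oddZeros (n : ℕ) :
    endEccSum (n + 1) .oddZeros = endEccSum n .one + endCount n .one +
      (endEccSum n .evenZeros + endCount n .evenZeros) := by
  rw [endEccSum, endSum_succ_oddZeros, endEccSum_snoc, endEccSum_snoc]
  simp

theorem endEccSum_succ_evenZeros (n : ℕ) :
    endEccSum (n + 1) .evenZeros = endEccSum n .oddZeros := by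
  rw [endEccSum, endSum_succ_evenZeros, endEccSum_snoc]
  simp

theorem endEccSum_eq (n : ℕ) :
    5 * endEccSum n .one =
      (n + 1) * (2 * Nat.fib (n + 1) + Nat.fib (n + 2)) + 2 * Nat.fib (n + 1) ∧
    5 * endEccSum n .oddZeros =
      (n + 1) * (2 * Nat.fib (n + 1) + Nat.fib (n + 2)) + 2 * Nat.fib (n + 1) ∧
    5 * endEccSum n .evenZeros + Nat.fib (n + 1) = (n + 1) * (2 * Nat.fib n + Nat.fib (n + 1)) := by
  induction n with
  | zero => decide
  | succ n ih =>
    obtain ⟨h₁, h₂, h₃⟩ := ih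
    obtain ⟨c₁, c₂, c₃⟩ := endCount_eq n
    rw [endEccSum_succ_one, endEccSum_succ_oddZeros, endEccSum_succ_evenZeros, c₁, c₂, c₃]
    have f₂ := Nat.fib_add_two (n := n)
    have f₃ := Nat.fib_add_two (n := n + 1)
    refine ⟨?_, ?_, ?_⟩ <;> nlinarith

theorem card_fibV (n : ℕ) : Fintype.card (FibV n) = Nat.fib (n + 2) := by
  cases n with
  | zero => rfl
  | succ n =>
    obtain ⟨c₁, c₂, c₃⟩ := endCount_eq n
    rw [Fintype.card_eq_sum_ones, sum_fibV_eq_endSum (fun _ => 1)]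
    simp only [endCount] at c₁ c₂ c₃
    rw [c₁, c₂, c₃, Nat.fib_add_two, Nat.fib_add_two (n := n)]
    ring

theorem sum_gecc_fibCube (n : ℕ) :
    5 * ∑ u : FibV n, gecc (fibCube n) u =
      n * (3 * Nat.fib n + 4 * Nat.fib (n + 1)) + 3 * Nat.fib n := by
  cases n with
  | zero => simp [gecc_fibCube, hammingDist]
  | succ n =>
    obtain ⟨e₁, e₂, e₃⟩ := endEccSum_eq n
    simp only [gecc_fibCube]
    rw [sum_fibV_eq_endSum (fun u => hammingDist u (farthest u))]
    have f₂ := Nat.fib_add_two (n := n)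
    simp only [endEccSum] at e₁ e₂ e₃
    nlinarith

section Asymptotics

open Filter Topology Real goldenRatio

theorem tendsto_fib_div_goldenRatio_pow :
    Tendsto (fun n => (Nat.fib n : ℝ) / φ ^ n) atTop (𝓝 (1 / √5)) := by
  have hlt : |ψ / φ| < 1 := by
    rw [abs_div, abs_of_pos goldenRatio_pos, abs_of_neg goldenConj_neg, div_lt_one goldenRatio_pos]
    linarith [goldenRatio_add_goldenConj, one_lt_goldenRatio]
  have hpow := (tendsto_pow_atTop_nhds_zero_of_abs_lt_one hlt).const_sub 1 |>.div_const √5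
  rw [sub_zero] at hpow
  refine hpow.congr fun n => ?_
  have := pow_ne_zero n goldenRatio_ne_zero
  rw [coe_fib_eq, div_pow]
  field_simp

theorem tendsto_fib_div_fib_add (k : ℕ) :
    Tendsto (fun n => (Nat.fib n : ℝ) / Nat.fib (n + k)) atTop (𝓝 (φ ^ k)⁻¹) := by
  have h := tendsto_fib_div_goldenRatio_pow
  have hk := (h.comp (tendsto_add_atTop_nat k)).mul_const (φ ^ k)
  have hφ := goldenRatio_ne_zero
  convert h.div hk (by positivity) using 1
  · funext n
    simp only [Pi.div_apply, Function.comp_apply, pow_add]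
    field_simp
  · field_simp

theorem tendsto_avg_ecc_formula :
    Tendsto (fun n : ℕ =>
      (3 * ((Nat.fib n : ℝ) / Nat.fib (n + 2)) +
          4 * ((Nat.fib (n + 1) : ℝ) / Nat.fib (n + 2))) / 5 +
        3 / 5 * ((Nat.fib n : ℝ) / Nat.fib (n + 2)) / n) atTop (𝓝 ((5 + √5) / 10)) := by
  have h₀ := tendsto_fib_div_fib_add 2
  have h₁ := (tendsto_fib_div_fib_add 1).comp (tendsto_add_atTop_nat 1)
  have hlim := (((h₀.const_mul 3).add (h₁.const_mul 4)).div_const 5).add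
    ((h₀.const_mul (3 / 5)).div_atTop tendsto_natCast_atTop_atTop)
  have hval : (3 * (φ ^ 2)⁻¹ + 4 * (φ ^ 1)⁻¹) / 5 + 0 = (5 + √5) / 10 := by
    rw [pow_one, ← inv_pow, inv_goldenRatio, neg_sq, goldenConj_sq]
    ring
  exact hval ▸ hlim

end Asymptotics

theorem avg_ecc_fibCube_div_eq {n : ℕ} (hn : n ≠ 0) :
    ((∑ u : FibV n, gecc (fibCube n) u : ℕ) : ℝ) / Fintype.card (FibV n) / n =
      (3 * (Nat.fib n / Nat.fib (n + 2)) + 4 * (Nat.fib (n + 1) / Nat.fib (n + 2))) / 5 +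
        3 / 5 * (Nat.fib n / Nat.fib (n + 2)) / n := by
  have hsum : (5 : ℝ) * (∑ u : FibV n, gecc (fibCube n) u : ℕ) =
      n * (3 * Nat.fib n + 4 * Nat.fib (n + 1)) + 3 * Nat.fib n := by
    exact_mod_cast sum_gecc_fibCube n
  have hfib : (Nat.fib (n + 2) : ℝ) ≠ 0 := by exact_mod_cast (Nat.fib_pos.mpr (by omega)).ne'
  have hn' : (n : ℝ) ≠ 0 := by exact_mod_cast hn
  rw [card_fibV]
  field_simp
  linear_combination hsum

/-- The average eccentricity of Γ_n, divided by n, converges to (5+√5)/10. -/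
theorem avg_ecc_fibCube_tendsto :
    Filter.Tendsto
      (fun n : ℕ =>
        ((∑ u : FibV n, gecc (fibCube n) u : ℕ) : ℝ) / (Fintype.card (FibV n)) / n)
      Filter.atTop (nhds ((5 + Real.sqrt 5) / 10)) :=
  tendsto_avg_ecc_formula.congr'
    ((Filter.eventually_ne_atTop 0).mono fun _ hn => (avg_ecc_fibCube_div_eq hn).symm)
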